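/- Let α : ℝ → ℝ³ be a smooth unit-speed curve with smooth Frenet apparatus: T = α', orthonormal vector fields T, N, B, curvature κ(t) > 0 and torsion τ(t) satisfying T' = κN, N' = −κT + τB, B' = −τN. Define γ : ℝ → ℝ⁵ by γ(t) = (T(t), (α(t)·α'(t)) ε). Then there exists a function f : ℝ → ℝ with γ''(t) = f(t) γ(t) for all t (i.e. the family of normal planes to α is a Lorentzian geodesic family, the acceleration being everywhere Lorentz-normal to Λ⁴) if and only if κ' ≡ 0 and τ ≡ 0, i.e. if and only if α is a portion of a circle; and in that case f(t) = −κ² for all t. -/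

import Mathlib

open RealInnerProductSpace

/-- The point `(u, cε) = (u₁, u₂, u₃, c, c) ∈ ℝ⁵` (general form in `ℝ^{n+2}`). -/
noncomputable def emb {n : ℕ} (u : EuclideanSpace ℝ (Fin n)) (c : ℝ) : Fin (n + 2) → ℝ :=
  fun i => if h : (i : ℕ) < n then u ⟨i, h⟩ else c

lemma emb_add {n : ℕ} (u v : EuclideanSpace ℝ (Fin n)) (c d : ℝ) :
    emb (u + v) (c + d) = emb u c + emb v d := by
  funext i
  by_cases h : (i : ℕ) < n <;> simp [emb, h]

lemma emb_smul {n : ℕ} (r : ℝ) (u : EuclideanSpace ℝ (Fin n)) (c : ℝ) :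
    emb (r • u) (r * c) = r • emb u c := by
  funext i
  by_cases h : (i : ℕ) < n <;> simp [emb, h]

lemma emb_left_eq {n : ℕ} {u v : EuclideanSpace ℝ (Fin n)} {c d : ℝ}
    (h : emb u c = emb v d) : u = v := by
  ext j
  have := congrFun h ⟨(j : ℕ), by omega⟩
  simpa [emb, j.isLt] using this

/-- The embedding as a continuous linear map. -/
noncomputable def embL (n : ℕ) : (EuclideanSpace ℝ (Fin n) × ℝ) →L[ℝ] (Fin (n + 2) → ℝ) :=
  LinearMap.toContinuousLinearMap
    { toFun := fun p => emb p.1 p.2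
      map_add' := fun p q => emb_add p.1 q.1 p.2 q.2
      map_smul' := fun r p => (emb_smul r p.1 p.2).symm ▸ rfl }

@[simp] lemma embL_apply {n : ℕ} (u : EuclideanSpace ℝ (Fin n)) (c : ℝ) :
    embL n (u, c) = emb u c := rfl

/-- For a smooth unit-speed curve `α` in `ℝ³` with Frenet apparatus `T = α'`, `N`, `B`,
curvature `κ > 0` and torsion `τ` (`T' = κN`, `N' = −κT + τB`, `B' = −τN`), set
`γ(t) = (T(t), (α(t)·α'(t))ε) ∈ ℝ⁵`.  Then there is `f` with `γ'' = f γ` (the family of normal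
planes is a Lorentzian geodesic family, the acceleration being Lorentz-normal to `Λ⁴`) iff
`κ' ≡ 0` and `τ ≡ 0`, i.e. iff `α` is a portion of a circle; and in that case `f = −κ²`. -/
theorem normal_planes_geodesic_iff_circle
    (α T N B : ℝ → EuclideanSpace ℝ (Fin 3)) (κ τ : ℝ → ℝ)
    (hα : ContDiff ℝ (⊤ : ℕ∞) α) (hN : ContDiff ℝ (⊤ : ℕ∞) N) (hB : ContDiff ℝ (⊤ : ℕ∞) B)
    (hκ : ContDiff ℝ (⊤ : ℕ∞) κ) (hτ : ContDiff ℝ (⊤ : ℕ∞) τ)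
    (hT : ∀ t, T t = deriv α t)
    (hunit : ∀ t, ‖deriv α t‖ = 1)
    (hκpos : ∀ t, 0 < κ t)
    (hTu : ∀ t, ‖T t‖ = 1) (hNu : ∀ t, ‖N t‖ = 1) (hBu : ∀ t, ‖B t‖ = 1)
    (hTN : ∀ t, ⟪T t, N t⟫ = 0) (hTB : ∀ t, ⟪T t, B t⟫ = 0) (hNB : ∀ t, ⟪N t, B t⟫ = 0)
    (hT' : ∀ t, deriv T t = κ t • N t)
    (hN' : ∀ t, deriv N t = -κ t • T t + τ t • B t)
    (hB' : ∀ t, deriv B t = -τ t • N t)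
    (γ : ℝ → Fin 5 → ℝ)
    (hγ : ∀ t, γ t = emb (T t) ⟪α t, deriv α t⟫) :
    ((∃ f : ℝ → ℝ, ∀ t : ℝ, deriv (deriv γ) t = f t • γ t) ↔
      ((∀ t, deriv κ t = 0) ∧ (∀ t, τ t = 0))) ∧
    (((∀ t, deriv κ t = 0) ∧ (∀ t, τ t = 0)) →
      ∀ t : ℝ, deriv (deriv γ) t = (-(κ t) ^ 2) • γ t) := by
  -- smoothness of T
  have hTsm : ContDiff ℝ ((⊤ : ℕ∞) : WithTop ℕ∞) T := by
    have h := (contDiff_infty_iff_deriv.mp (hα.of_le (by simp))).2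
    rw [funext hT]; exact h
  have hαd : ∀ t, HasDerivAt α (T t) t := fun t => by
    have h := ((hα.differentiable (by simp)) t).hasDerivAt
    rwa [← hT t] at h
  have hTd : ∀ t, HasDerivAt T (κ t • N t) t := fun t => by
    have h := ((hTsm.differentiable (by simp)) t).hasDerivAt
    rwa [hT' t] at h
  have hNd : ∀ t, HasDerivAt N (-κ t • T t + τ t • B t) t := fun t => by
    have h := ((hN.differentiable (by simp)) t).hasDerivAt
    rwa [hN' t] at h
  have hκd : ∀ t, HasDerivAt κ (deriv κ t) t := fun t =>
    ((hκ.differentiable (by simp)) t).hasDerivAt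
  have hTT : ∀ t, ⟪T t, T t⟫ = 1 := fun t => by
    have := real_inner_self_eq_norm_sq (T t)
    rw [hTu t] at this; simpa using this
  -- rewrite γ
  have hγ' : γ = fun t => emb (T t) ⟪α t, T t⟫ := by
    funext t; rw [hγ t, hT t]
  -- first derivative
  have hcd : ∀ t, HasDerivAt (fun s => ⟪α s, T s⟫) (κ t * ⟪α t, N t⟫ + 1) t := fun t => by
    have h := (hαd t).inner ℝ (hTd t)
    rw [real_inner_smul_right, hTT t] at h
    exact h
  have hγd : ∀ t, HasDerivAt γ (emb (κ t • N t) (κ t * ⟪α t, N t⟫ + 1)) t := fun t => by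
    have hp : HasDerivAt (fun s => ((T s, ⟪α s, T s⟫) : EuclideanSpace ℝ (Fin 3) × ℝ))
        (κ t • N t, κ t * ⟪α t, N t⟫ + 1) t := (hTd t).prodMk (hcd t)
    have h := ((embL 3).hasFDerivAt.comp_hasDerivAt t hp)
    rw [hγ']
    exact h
  have hdγ : deriv γ = fun t => emb (κ t • N t) (κ t * ⟪α t, N t⟫ + 1) :=
    funext fun t => (hγd t).deriv
  -- second derivative
  have hκNd : ∀ t, HasDerivAt (fun s => κ s • N s)
      (κ t • (-κ t • T t + τ t • B t) + deriv κ t • N t) t := fun t =>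
    (hκd t).smul (hNd t)
  have hαNd : ∀ t, HasDerivAt (fun s => ⟪α s, N s⟫)
      (⟪α t, -κ t • T t + τ t • B t⟫ + ⟪T t, N t⟫) t := fun t =>
    (hαd t).inner ℝ (hNd t)
  have hc2d : ∀ t, HasDerivAt (fun s => κ s * ⟪α s, N s⟫ + 1)
      (deriv κ t * ⟪α t, N t⟫ + κ t * (⟪α t, -κ t • T t + τ t • B t⟫ + ⟪T t, N t⟫)) t :=
    fun t => ((hκd t).mul (hαNd t)).add_const 1
  have hkey : ∀ t, deriv (deriv γ) t =
      emb (κ t • (-κ t • T t + τ t • B t) + deriv κ t • N t)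
        (deriv κ t * ⟪α t, N t⟫ + κ t * (⟪α t, -κ t • T t + τ t • B t⟫ + ⟪T t, N t⟫)) := by
    intro t
    have hp : HasDerivAt (fun s =>
        ((κ s • N s, κ s * ⟪α s, N s⟫ + 1) : EuclideanSpace ℝ (Fin 3) × ℝ))
        (κ t • (-κ t • T t + τ t • B t) + deriv κ t • N t,
         deriv κ t * ⟪α t, N t⟫ + κ t * (⟪α t, -κ t • T t + τ t • B t⟫ + ⟪T t, N t⟫)) t :=
      (hκNd t).prodMk (hc2d t)
    have h := ((embL 3).hasFDerivAt.comp_hasDerivAt t hp)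
    rw [hdγ]
    exact h.deriv
  -- orthonormality facts
  have hNN : ∀ t, ⟪N t, N t⟫ = (1:ℝ) := fun t => by
    have := real_inner_self_eq_norm_sq (N t); rw [hNu t] at this; simpa using this
  have hBB : ∀ t, ⟪B t, B t⟫ = (1:ℝ) := fun t => by
    have := real_inner_self_eq_norm_sq (B t); rw [hBu t] at this; simpa using this
  have hNT : ∀ t, ⟪N t, T t⟫ = (0:ℝ) := fun t => by rw [real_inner_comm]; exact hTN t
  have hBT : ∀ t, ⟪B t, T t⟫ = (0:ℝ) := fun t => by rw [real_inner_comm]; exact hTB t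
  have hBN : ∀ t, ⟪B t, N t⟫ = (0:ℝ) := fun t => by rw [real_inner_comm]; exact hNB t
  -- in the circle case the second derivative has the claimed form
  have hcirc : ((∀ t, deriv κ t = 0) ∧ (∀ t, τ t = 0)) →
      ∀ t : ℝ, deriv (deriv γ) t = (-(κ t) ^ 2) • γ t := by
    rintro ⟨h1, h2⟩ t
    rw [hkey t, hγ', h1 t, h2 t]
    have he : emb ((-(κ t) ^ 2) • T t) ((-(κ t) ^ 2) * ⟪α t, T t⟫)
        = (-(κ t) ^ 2) • emb (T t) ⟪α t, T t⟫ := emb_smul _ _ _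
    have hV : κ t • (-κ t • T t + (0:ℝ) • B t) + (0:ℝ) • N t = (-(κ t) ^ 2) • T t := by
      module
    have hv : (0:ℝ) * ⟪α t, N t⟫ + κ t * (⟪α t, -κ t • T t + (0:ℝ) • B t⟫ + ⟪T t, N t⟫)
        = (-(κ t) ^ 2) * ⟪α t, T t⟫ := by
      rw [inner_add_right, real_inner_smul_right, real_inner_smul_right, hTN t]; ring
    rw [hV, hv, he]
  refine ⟨⟨?_, fun h => ⟨fun t => -(κ t) ^ 2, hcirc h⟩⟩, hcirc⟩
  rintro ⟨f, hf⟩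
  have hvec : ∀ t, κ t • (-κ t • T t + τ t • B t) + deriv κ t • N t = f t • T t := by
    intro t
    have h := hf t
    rw [hkey t, hγ'] at h
    have h2 : emb (κ t • (-κ t • T t + τ t • B t) + deriv κ t • N t)
        (deriv κ t * ⟪α t, N t⟫ + κ t * (⟪α t, -κ t • T t + τ t • B t⟫ + ⟪T t, N t⟫))
        = emb (f t • T t) (f t * ⟪α t, T t⟫) := by
      rw [emb_smul]; exact h
    exact emb_left_eq h2
  constructor
  · intro t
    have h := congrArg (fun v => ⟪v, N t⟫) (hvec t)
    simp only [inner_add_left, real_inner_smul_left, neg_smul, inner_neg_left] at h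
    rw [hNN t, hTN t, hBN t] at h
    simpa using h
  · intro t
    have h := congrArg (fun v => ⟪v, B t⟫) (hvec t)
    simp only [inner_add_left, real_inner_smul_left, neg_smul, inner_neg_left] at h
    rw [hBB t, hTB t, hNB t] at h
    have hκτ : κ t * τ t = 0 := by linarith
    rcases mul_eq_zero.mp hκτ with h' | h'
    · exact absurd h' (ne_of_gt (hκpos t))
    · exact h'
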